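/- Let H : ℝ^n → ℝ be a norm with polar norm H°. Let M > 0, R = (M / κ_n)^{1/n}, let g_* : [0, M] → [0, ∞) be nondecreasing and integrable, and let c₀ ≥ 0. Define u⋆(x) = ∫_{κ_n (H°(x))^n}^{M} g_*(t) / (n κ_n^{1/n} t^{1 − 1/n}) dt + c₀ for x ∈ 𝒲_R. Then ∫_{𝒲_R} u⋆(x) dx = (1 / (n κ_n^{1/n})) ∫_0^{M} t^{1/n} g_*(t) dt + c₀ M. -/

import Mathlib

/-! The normalised volume `q(x) = κ H°(x)^n` is uniformly distributed, `|{q < t}| = t`: its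
sublevel sets are Wulff balls, and `|𝒲_r| = κ r^n` since `𝒲_r = r • 𝒲_1` (`H°` is a norm).
Writing `u⋆(x) - c₀ = ∫_{q(x)}^M h` with `h(t) = g_*(t) / (n κ^{1/n} t^{1-1/n})`, Tonelli gives
`∫_{𝒲_R} (u⋆ - c₀) = ∫_0^M h(t) |{q < t}| dt = ∫_0^M t h(t) dt`. Monotonicity bounds `g_*` by
`g_*(M)`, which makes `h` integrable at `0`. -/

open MeasureTheory Set
open scoped ENNReal

noncomputable section

/-- `H` is an anisotropic norm: positive away from `0`, absolutely homogeneous,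
and subadditive. -/
def IsAnisoNorm {n : ℕ} (H : EuclideanSpace ℝ (Fin n) → ℝ) : Prop :=
  (∀ ξ : EuclideanSpace ℝ (Fin n), ξ ≠ 0 → 0 < H ξ) ∧
  (∀ (t : ℝ) (ξ : EuclideanSpace ℝ (Fin n)), H (t • ξ) = |t| * H ξ) ∧
  (∀ ξ η : EuclideanSpace ℝ (Fin n), H (ξ + η) ≤ H ξ + H η)

/-- The polar norm `H°(x) = sup_{ξ ≠ 0} ⟨x, ξ⟩ / H(ξ)`. -/
def polar {n : ℕ} (H : EuclideanSpace ℝ (Fin n) → ℝ)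
    (x : EuclideanSpace ℝ (Fin n)) : ℝ :=
  ⨆ ξ : {ξ : EuclideanSpace ℝ (Fin n) // ξ ≠ 0},
    (inner ℝ x (ξ : EuclideanSpace ℝ (Fin n)) : ℝ) / H ξ

/-- The Wulff ball `𝒲_R = {x : H°(x) < R}`. -/
def wulff {n : ℕ} (H : EuclideanSpace ℝ (Fin n) → ℝ) (R : ℝ) :
    Set (EuclideanSpace ℝ (Fin n)) :=
  {x | polar H x < R}

open scoped Pointwise

namespace Seminorm

variable {E : Type*} [NormedAddCommGroup E] [NormedSpace ℝ E] [FiniteDimensional ℝ E]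
  (p : Seminorm ℝ E)

protected theorem continuous_of_finiteDimensional : Continuous p :=
  continuousOn_univ.1 (p.convexOn.continuousOn isOpen_univ)

theorem exists_pos_mul_norm_le (hp : ∀ x, x ≠ 0 → 0 < p x) :
    ∃ a > 0, ∀ x, a * ‖x‖ ≤ p x := by
  obtain ⟨a, ha, hle⟩ := (isCompact_sphere (0 : E) 1).exists_forall_le'
    p.continuous_of_finiteDimensional.continuousOn
    (fun x hx => hp x (ne_zero_of_mem_unit_sphere ⟨x, hx⟩))
  refine ⟨a, ha, fun x => ?_⟩
  rcases eq_or_ne x 0 with rfl | hx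
  · simp
  have hx' : 0 < ‖x‖ := norm_pos_iff.2 hx
  have := hle (‖x‖⁻¹ • x) (by simp [norm_smul, hx'.ne'])
  rwa [map_smul_eq_mul, norm_inv, norm_norm, le_inv_mul_iff₀ hx', mul_comm] at this

end Seminorm

namespace IsAnisoNorm

variable {n : ℕ} {H : EuclideanSpace ℝ (Fin n) → ℝ} (hH : IsAnisoNorm H)
include hH

def toSeminorm : Seminorm ℝ (EuclideanSpace ℝ (Fin n)) :=
  Seminorm.of H hH.2.2 fun t ξ => hH.2.1 t ξ

theorem exists_pos_mul_norm_le : ∃ a > 0, ∀ ξ, a * ‖ξ‖ ≤ H ξ :=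
  hH.toSeminorm.exists_pos_mul_norm_le hH.1

theorem bddAbove_range_polar (x : EuclideanSpace ℝ (Fin n)) :
    BddAbove (range fun ξ : {ξ : EuclideanSpace ℝ (Fin n) // ξ ≠ 0} =>
      (inner ℝ x (ξ : EuclideanSpace ℝ (Fin n)) : ℝ) / H ξ) := by
  obtain ⟨a, ha, hle⟩ := hH.exists_pos_mul_norm_le
  refine ⟨a⁻¹ * ‖x‖, ?_⟩
  rintro _ ⟨⟨ξ, hξ⟩, rfl⟩
  rw [div_le_iff₀ (hH.1 ξ hξ)]
  calc inner ℝ x ξ ≤ ‖x‖ * ‖ξ‖ := real_inner_le_norm x ξ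
    _ = a⁻¹ * ‖x‖ * (a * ‖ξ‖) := by field_simp
    _ ≤ a⁻¹ * ‖x‖ * H ξ := by gcongr; exact hle ξ

theorem le_polar (x : EuclideanSpace ℝ (Fin n)) (ξ : EuclideanSpace ℝ (Fin n)) (hξ : ξ ≠ 0) :
    inner ℝ x ξ / H ξ ≤ polar H x :=
  le_ciSup (hH.bddAbove_range_polar x) ⟨ξ, hξ⟩

theorem polar_nonneg (x : EuclideanSpace ℝ (Fin n)) : 0 ≤ polar H x := by
  rcases isEmpty_or_nonempty {ξ : EuclideanSpace ℝ (Fin n) // ξ ≠ 0} with hE | ⟨ξ, hξ⟩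
  · exact (Real.iSup_of_isEmpty _).ge
  have hneg : H (-ξ) = H ξ := by simpa using hH.2.1 (-1) ξ
  rcases le_total 0 (inner ℝ x ξ / H ξ) with h | h
  · exact h.trans (hH.le_polar x ξ hξ)
  · refine le_trans ?_ (hH.le_polar x (-ξ) (neg_ne_zero.2 hξ))
    rw [inner_neg_right, hneg, neg_div]
    linarith

theorem polar_add_le (x y : EuclideanSpace ℝ (Fin n)) :
    polar H (x + y) ≤ polar H x + polar H y :=
  Real.iSup_le (fun ξ => by
      rw [inner_add_left, add_div]
      exact add_le_add (hH.le_polar x ξ ξ.2) (hH.le_polar y ξ ξ.2))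
    (add_nonneg (hH.polar_nonneg x) (hH.polar_nonneg y))

theorem polar_neg (x : EuclideanSpace ℝ (Fin n)) : polar H (-x) = polar H x := by
  have hneg : ∀ ξ, H (-ξ) = H ξ := fun ξ => by simpa using hH.2.1 (-1) ξ
  let e : {ξ : EuclideanSpace ℝ (Fin n) // ξ ≠ 0} ≃ {ξ : EuclideanSpace ℝ (Fin n) // ξ ≠ 0} :=
    (Equiv.neg _).subtypeEquiv fun ξ => neg_ne_zero.symm
  rw [polar, polar, ← e.iSup_comp]
  congr 1
  ext ξ
  change inner ℝ (-x) (-(ξ : EuclideanSpace ℝ (Fin n))) / H (-(ξ : EuclideanSpace ℝ (Fin n))) = _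
  rw [inner_neg_neg, hneg]

theorem polar_smul (c : ℝ) (x : EuclideanSpace ℝ (Fin n)) :
    polar H (c • x) = |c| * polar H x := by
  have hsmul : ∀ c, 0 ≤ c → ∀ x, polar H (c • x) = c * polar H x := fun c hc x => by
    rw [polar, polar, Real.mul_iSup_of_nonneg hc]
    simp only [inner_smul_left, mul_div_assoc, RCLike.conj_to_real]
  rcases le_total 0 c with hc | hc
  · rw [abs_of_nonneg hc, hsmul c hc]
  · rw [abs_of_nonpos hc, ← hH.polar_neg, ← hsmul (-c) (neg_nonneg.2 hc), neg_smul]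

theorem polar_zero : polar H 0 = 0 := by
  simpa using hH.polar_smul 0 0

def polarSeminorm : Seminorm ℝ (EuclideanSpace ℝ (Fin n)) :=
  Seminorm.of (polar H) hH.polar_add_le hH.polar_smul

theorem polar_pos {x : EuclideanSpace ℝ (Fin n)} (hx : x ≠ 0) : 0 < polar H x := by
  refine lt_of_lt_of_le ?_ (hH.le_polar x x hx)
  rw [real_inner_self_eq_norm_sq]
  exact div_pos (by positivity) (hH.1 x hx)

theorem continuous_polar : Continuous (polar H) :=
  hH.polarSeminorm.continuous_of_finiteDimensional

theorem exists_pos_mul_norm_le_polar : ∃ a > 0, ∀ x, a * ‖x‖ ≤ polar H x :=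
  hH.polarSeminorm.exists_pos_mul_norm_le fun _ => hH.polar_pos

theorem wulff_eq_ball (r : ℝ) : wulff H r = hH.polarSeminorm.ball 0 r :=
  (hH.polarSeminorm.ball_zero_eq (r := r)).symm

theorem isOpen_wulff (r : ℝ) : IsOpen (wulff H r) :=
  isOpen_lt hH.continuous_polar continuous_const

theorem volume_wulff {r : ℝ} (hr : 0 < r) :
    volume (wulff H r) = ENNReal.ofReal (r ^ n) * volume (wulff H 1) := by
  have hball : hH.polarSeminorm.ball 0 r = r • hH.polarSeminorm.ball 0 1 := by
    rw [Seminorm.smul_ball_zero hr.ne', Real.norm_of_nonneg hr.le, mul_one]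
  rw [hH.wulff_eq_ball, hH.wulff_eq_ball, hball, Measure.addHaar_smul, finrank_euclideanSpace_fin,
    abs_of_pos (pow_pos hr n)]

theorem volume_wulff_one_pos : 0 < volume (wulff H 1) :=
  (hH.isOpen_wulff 1).measure_pos volume ⟨0, by simp [wulff, hH.polar_zero]⟩

theorem volume_wulff_one_lt_top : volume (wulff H 1) < ⊤ := by
  obtain ⟨a, ha, hle⟩ := hH.exists_pos_mul_norm_le_polar
  refine ((Metric.isBounded_ball (x := 0) (r := a⁻¹)).subset fun x hx => ?_).measure_lt_top
  rw [mem_ball_zero_iff, ← mul_one a⁻¹, lt_inv_mul_iff₀ ha]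
  exact (hle x).trans_lt hx

theorem setOf_mul_polar_pow_lt (hn : n ≠ 0) {κ t : ℝ} (hκ : 0 < κ) (ht : 0 < t) :
    {x | κ * polar H x ^ n < t} = wulff H ((t / κ) ^ (1 / (n : ℝ))) := by
  ext x
  have hρ : 0 ≤ (t / κ) ^ (1 / (n : ℝ)) := by positivity
  change κ * polar H x ^ n < t ↔ polar H x < (t / κ) ^ (1 / (n : ℝ))
  rw [← pow_lt_pow_iff_left₀ (hH.polar_nonneg x) hρ hn, one_div,
    Real.rpow_inv_natCast_pow (by positivity) hn, lt_div_iff₀' hκ]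

theorem volume_setOf_mul_polar_pow_lt (hn : n ≠ 0) {t : ℝ} (ht : 0 < t) :
    volume {x | (volume (wulff H 1)).toReal * polar H x ^ n < t} = ENNReal.ofReal t := by
  set κ := (volume (wulff H 1)).toReal
  have hvol : volume (wulff H 1) = ENNReal.ofReal κ :=
    (ENNReal.ofReal_toReal hH.volume_wulff_one_lt_top.ne).symm
  have hκ : 0 < κ := ENNReal.toReal_pos hH.volume_wulff_one_pos.ne' hH.volume_wulff_one_lt_top.ne
  rw [hH.setOf_mul_polar_pow_lt hn hκ ht, hH.volume_wulff (by positivity), hvol,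
    ← ENNReal.ofReal_mul (by positivity), one_div, Real.rpow_inv_natCast_pow (by positivity) hn,
    div_mul_cancel₀ _ hκ.ne']

end IsAnisoNorm

section Distribution

variable {X : Type*} [MeasurableSpace X] {μ : Measure X} {q : X → ℝ}
  (hq : Measurable q) {M : ℝ} (hM : 0 ≤ M) (hq_mem : ∀ᵐ x ∂μ, q x ∈ Icc 0 M)
  (hμ : ∀ t ∈ Ioc 0 M, μ {x | q x < t} = ENNReal.ofReal t)
  {h : ℝ → ℝ} (hh : IntegrableOn h (Ioc 0 M)) (hh_nonneg : ∀ t ∈ Ioc 0 M, 0 ≤ h t)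

include hq_mem hh_nonneg in
theorem ae_nonneg_intervalIntegral_comp : 0 ≤ᵐ[μ] fun x => ∫ t in q x..M, h t :=
  hq_mem.mono fun x hx => by
    change 0 ≤ ∫ t in q x..M, h t
    rw [intervalIntegral.integral_of_le hx.2]
    exact setIntegral_nonneg measurableSet_Ioc fun t ht => hh_nonneg t ⟨hx.1.trans_lt ht.1, ht.2⟩

include hq hM hq_mem hh in
theorem aestronglyMeasurable_intervalIntegral_comp :
    AEStronglyMeasurable (fun x => ∫ t in q x..M, h t) μ := by
  have hG : ContinuousOn (fun s => ∫ t in s..M, h t) (Icc 0 M) := by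
    rw [← uIcc_of_le hM]
    refine intervalIntegral.continuousOn_primitive_interval_left ?_
    rwa [uIcc_of_le hM, integrableOn_Icc_iff_integrableOn_Ioc enorm_ne_top]
  refine (hG.domRestrict.Icc_extend' (h := hM)).measurable.comp hq
    |>.aestronglyMeasurable.congr (hq_mem.mono fun x hx => ?_)
  simp [IccExtend_of_mem _ _ hx]

variable [SFinite μ]

include hq in
theorem lintegral_setLIntegral_Ioi_eq_lintegral_mul_measure_lt {ν : Measure ℝ} [SFinite ν]
    {f : ℝ → ℝ≥0∞} (hf : AEMeasurable f ν) :
    ∫⁻ x, ∫⁻ t in Ioi (q x), f t ∂ν ∂μ = ∫⁻ t, f t * μ {x | q x < t} ∂ν := by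
  have hmeas : MeasurableSet {z : X × ℝ | q z.1 < z.2} :=
    measurableSet_lt (hq.comp measurable_fst) measurable_snd
  calc ∫⁻ x, ∫⁻ t in Ioi (q x), f t ∂ν ∂μ
      = ∫⁻ x, ∫⁻ t, {z : X × ℝ | q z.1 < z.2}.indicator (fun z => f z.2) (x, t) ∂ν ∂μ := by
        congr! 2 with x
        rw [← lintegral_indicator measurableSet_Ioi]
        rfl
    _ = ∫⁻ t, ∫⁻ x, {z : X × ℝ | q z.1 < z.2}.indicator (fun z => f z.2) (x, t) ∂μ ∂ν :=
        lintegral_lintegral_swap (hf.comp_snd.indicator hmeas)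
    _ = ∫⁻ t, f t * μ {x | q x < t} ∂ν := by
        congr! 2 with t
        rw [← lintegral_indicator_const (measurableSet_lt hq measurable_const)]
        rfl

include hq hM hq_mem hμ hh hh_nonneg

theorem lintegral_ofReal_intervalIntegral_comp :
    ∫⁻ x, ENNReal.ofReal (∫ t in q x..M, h t) ∂μ = ENNReal.ofReal (∫ t in 0..M, t * h t) := by
  have hlayer : ∀ s ∈ Icc 0 M, ENNReal.ofReal (∫ t in s..M, h t) =
      ∫⁻ t in Ioi s, ENNReal.ofReal (h t) ∂volume.restrict (Ioc 0 M) := fun s hs => by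
    rw [intervalIntegral.integral_of_le hs.2, ofReal_integral_eq_lintegral_ofReal
      (hh.mono_set (Ioc_subset_Ioc_left hs.1))
      (ae_restrict_of_forall_mem measurableSet_Ioc fun t ht =>
        hh_nonneg t ⟨hs.1.trans_lt ht.1, ht.2⟩),
      Measure.restrict_restrict measurableSet_Ioi, inter_comm, Ioc_inter_Ioi, sup_eq_right.2 hs.1]
  have hint : IntegrableOn (fun t => t * h t) (Ioc 0 M) :=
    hh.bdd_mul (c := M) measurable_id.aestronglyMeasurable
      (ae_restrict_of_forall_mem measurableSet_Ioc fun t ht => by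
        rw [Real.norm_of_nonneg ht.1.le]; exact ht.2)
  calc ∫⁻ x, ENNReal.ofReal (∫ t in q x..M, h t) ∂μ
      = ∫⁻ x, ∫⁻ t in Ioi (q x), ENNReal.ofReal (h t) ∂volume.restrict (Ioc 0 M) ∂μ :=
        lintegral_congr_ae (hq_mem.mono fun x hx => hlayer _ hx)
    _ = ∫⁻ t in Ioc 0 M, ENNReal.ofReal (h t) * μ {x | q x < t} :=
        lintegral_setLIntegral_Ioi_eq_lintegral_mul_measure_lt hq hh.aemeasurable.ennreal_ofReal
    _ = ∫⁻ t in Ioc 0 M, ENNReal.ofReal (t * h t) :=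
        setLIntegral_congr_fun measurableSet_Ioc fun t ht => by
          rw [hμ t ht, mul_comm, ENNReal.ofReal_mul ht.1.le]
    _ = ENNReal.ofReal (∫ t in 0..M, t * h t) := by
        rw [intervalIntegral.integral_of_le hM, ofReal_integral_eq_lintegral_ofReal hint
          (ae_restrict_of_forall_mem measurableSet_Ioc fun t ht =>
            mul_nonneg ht.1.le (hh_nonneg t ht))]

theorem integrable_intervalIntegral_comp : Integrable (fun x => ∫ t in q x..M, h t) μ := by
  refine ⟨aestronglyMeasurable_intervalIntegral_comp hq hM hq_mem hh,
    (hasFiniteIntegral_iff_ofReal (ae_nonneg_intervalIntegral_comp hq_mem hh_nonneg)).2 ?_⟩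
  rw [lintegral_ofReal_intervalIntegral_comp hq hM hq_mem hμ hh hh_nonneg]
  exact ENNReal.ofReal_lt_top

theorem integral_intervalIntegral_comp :
    ∫ x, (∫ t in q x..M, h t) ∂μ = ∫ t in 0..M, t * h t := by
  rw [integral_eq_lintegral_of_nonneg_ae (ae_nonneg_intervalIntegral_comp hq_mem hh_nonneg)
      (aestronglyMeasurable_intervalIntegral_comp hq hM hq_mem hh),
    lintegral_ofReal_intervalIntegral_comp hq hM hq_mem hμ hh hh_nonneg,
    ENNReal.toReal_ofReal (intervalIntegral.integral_nonneg hM fun t ht => ?_)]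
  rcases ht.1.eq_or_lt with rfl | ht0
  · simp
  · exact mul_nonneg ht.1 (hh_nonneg t ⟨ht0, ht.2⟩)

end Distribution

theorem setIntegral_setOf_lt_intervalIntegral_comp_add {X : Type*} [MeasurableSpace X]
    {μ : Measure X} [SFinite μ] {q : X → ℝ} (hq : Measurable q) (hq_nonneg : ∀ x, 0 ≤ q x)
    {M : ℝ} (hM : 0 < M) (hμ : ∀ t ∈ Ioc 0 M, μ {x | q x < t} = ENNReal.ofReal t)
    {h : ℝ → ℝ} (hh : IntegrableOn h (Ioc 0 M)) (hh_nonneg : ∀ t ∈ Ioc 0 M, 0 ≤ h t) (c : ℝ) :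
    ∫ x in {x | q x < M}, ((∫ t in q x..M, h t) + c) ∂μ = (∫ t in 0..M, t * h t) + c * M := by
  have hS : MeasurableSet {x | q x < M} := measurableSet_lt hq measurable_const
  have hq_mem : ∀ᵐ x ∂μ.restrict {x | q x < M}, q x ∈ Icc 0 M :=
    ae_restrict_of_forall_mem hS fun x hx => ⟨hq_nonneg x, le_of_lt hx⟩
  have hμS : ∀ t ∈ Ioc 0 M, μ.restrict {x | q x < M} {x | q x < t} = ENNReal.ofReal t :=
    fun t ht => by
      have hsub : {x | q x < t} ⊆ {x | q x < M} := fun x hx => lt_of_lt_of_le hx ht.2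
      rw [Measure.restrict_eq_self _ hsub, hμ t ht]
  have hμM : μ {x | q x < M} = ENNReal.ofReal M := hμ M ⟨hM, le_rfl⟩
  rw [integral_add (integrable_intervalIntegral_comp hq hM.le hq_mem hμS hh hh_nonneg)
      (integrableOn_const (by rw [hμM]; exact ENNReal.ofReal_ne_top)),
    integral_intervalIntegral_comp hq hM.le hq_mem hμS hh hh_nonneg, setIntegral_const,
    measureReal_def, hμM, ENNReal.toReal_ofReal hM.le, smul_eq_mul, mul_comm]

theorem integrableOn_div_mul_rpow_one_sub {g : ℝ → ℝ} {c s C M : ℝ} (hs : 0 < s)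
    (hg : AEStronglyMeasurable g (volume.restrict (Ioc 0 M))) (hgC : ∀ t ∈ Ioc 0 M, |g t| ≤ C) :
    IntegrableOn (fun t => g t / (c * t ^ (1 - s))) (Ioc 0 M) := by
  have hrpow : IntegrableOn (fun t : ℝ => c⁻¹ * t ^ (s - 1)) (Ioc 0 M) :=
    ((intervalIntegral.intervalIntegrable_rpow' (by linarith)).1).const_mul c⁻¹
  refine IntegrableOn.congr_fun (hrpow.bdd_mul hg (ae_restrict_of_forall_mem measurableSet_Ioc hgC))
    (fun t ht => ?_) measurableSet_Ioc
  rw [Real.rpow_sub ht.1, Real.rpow_one, Real.rpow_sub ht.1, Real.rpow_one]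
  field_simp

theorem intervalIntegral_mul_div_mul_rpow_one_sub {M : ℝ} (hM : 0 ≤ M) (g : ℝ → ℝ) (c s : ℝ) :
    ∫ t in 0..M, t * (g t / (c * t ^ (1 - s))) = 1 / c * ∫ t in 0..M, t ^ s * g t := by
  rw [← intervalIntegral.integral_const_mul]
  refine intervalIntegral.integral_congr_ae (ae_of_all _ fun t ht => ?_)
  rw [uIoc_of_le hM] at ht
  have ht0 : t ≠ 0 := ht.1.ne'
  rw [Real.rpow_sub ht.1, Real.rpow_one]
  field_simp

theorem integral_symmetrized_function_general {n : ℕ} (hn : 0 < n)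
    (H : EuclideanSpace ℝ (Fin n) → ℝ) (hH : IsAnisoNorm H)
    (M : ℝ) (hM : 0 < M)
    (κ : ℝ) (hκ : κ = (volume (wulff H 1)).toReal)
    (R : ℝ) (hR : R = (M / κ) ^ (1 / (n : ℝ)))
    (gs : ℝ → ℝ) (hgs_mono : MonotoneOn gs (Set.Icc 0 M))
    (hgs_nonneg : ∀ t ∈ Set.Icc (0 : ℝ) M, 0 ≤ gs t)
    (hgs_int : IntegrableOn gs (Set.Icc 0 M))
    (c₀ : ℝ)
    (ustar : EuclideanSpace ℝ (Fin n) → ℝ)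
    (hustar : ∀ x, ustar x =
      (∫ t in (κ * (polar H x) ^ n)..M,
        gs t / (n * κ ^ (1 / (n : ℝ)) * t ^ (1 - 1 / (n : ℝ)))) + c₀) :
    ∫ x in wulff H R, ustar x =
      (1 / (n * κ ^ (1 / (n : ℝ)))) * (∫ t in (0 : ℝ)..M, t ^ (1 / (n : ℝ)) * gs t) +
        c₀ * M := by
  have hκ0 : 0 < κ :=
    hκ ▸ ENNReal.toReal_pos hH.volume_wulff_one_pos.ne' hH.volume_wulff_one_lt_top.ne
  have hlevel : ∀ t, 0 < t → volume {x | κ * polar H x ^ n < t} = ENNReal.ofReal t :=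
    fun t ht => by simpa only [← hκ] using hH.volume_setOf_mul_polar_pow_lt hn.ne' ht
  have hgs_bdd : ∀ t ∈ Ioc 0 M, |gs t| ≤ gs M := fun t ht => by
    rw [abs_of_nonneg (hgs_nonneg t (Ioc_subset_Icc_self ht))]
    exact hgs_mono (Ioc_subset_Icc_self ht) ⟨hM.le, le_rfl⟩ ht.2
  simp only [hustar]
  rw [hR, ← hH.setOf_mul_polar_pow_lt hn.ne' hκ0 hM,
    setIntegral_setOf_lt_intervalIntegral_comp_add
      ((hH.continuous_polar.measurable.pow_const n).const_mul κ)
      (fun x => mul_nonneg hκ0.le (pow_nonneg (hH.polar_nonneg x) n)) hM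
      (fun t ht => hlevel t ht.1)
      (integrableOn_div_mul_rpow_one_sub (by positivity)
        (hgs_int.mono_set Ioc_subset_Icc_self).aestronglyMeasurable hgs_bdd)
      (fun t ht => div_nonneg (hgs_nonneg t (Ioc_subset_Icc_self ht))
        (by have := ht.1; positivity)),
    intervalIntegral_mul_div_mul_rpow_one_sub hM.le]

/-- **`L¹` norm of the symmetrized function:**
`∫_{𝒲_R} u⋆ = (1/(n κ^{1/n})) ∫_0^M t^{1/n} g_*(t) dt + c₀ M`. -/
theorem integral_symmetrized_function {n : ℕ} (hn : 0 < n)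
    (H : EuclideanSpace ℝ (Fin n) → ℝ) (hH : IsAnisoNorm H)
    (M : ℝ) (hM : 0 < M)
    (κ : ℝ) (hκ : κ = (volume (wulff H 1)).toReal)
    (R : ℝ) (hR : R = (M / κ) ^ (1 / (n : ℝ)))
    (gs : ℝ → ℝ) (hgs_mono : MonotoneOn gs (Set.Icc 0 M))
    (hgs_nonneg : ∀ t ∈ Set.Icc (0 : ℝ) M, 0 ≤ gs t)
    (hgs_int : IntegrableOn gs (Set.Icc 0 M))
    (c₀ : ℝ) (hc₀ : 0 ≤ c₀)
    (ustar : EuclideanSpace ℝ (Fin n) → ℝ)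
    (hustar : ∀ x, ustar x =
      (∫ t in (κ * (polar H x) ^ n)..M,
        gs t / (n * κ ^ (1 / (n : ℝ)) * t ^ (1 - 1 / (n : ℝ)))) + c₀) :
    ∫ x in wulff H R, ustar x =
      (1 / (n * κ ^ (1 / (n : ℝ)))) * (∫ t in (0 : ℝ)..M, t ^ (1 / (n : ℝ)) * gs t) +
        c₀ * M :=
  integral_symmetrized_function_general hn H hH M hM κ hκ R hR gs hgs_mono hgs_nonneg hgs_int c₀
    ustar hustar

end
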